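/- arXiv:2009.00379 — 2 statements merged into one kernel-verified Lean document; each statement's English description precedes it below -/
import Mathlib

section
/- Let H₁, H₂ be Hilbert spaces, L : H₁ → H₂ a compact injective linear operator with dense range, and f ∈ H₂ not in the range of L. Let h_α be the unique solution of α h_α + L*L h_α = L*f for α > 0. Then ‖h_α‖_{H₁} → ∞ as α → 0⁺. -/
/-!
For `0 < β ≤ α` the two Tikhonov equations give `L*L (h β - h α) = α h α - β h β`, and positivity
of `L*L` turns this into `‖h β - h α‖² ≤ ‖h β‖² - ‖h α‖²`. Hence `‖h α‖` grows as `α ↓ 0`; if it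
stayed bounded, `h α` would be Cauchy and converge to some `x₀` with `L*L x₀ = L* f`. Dense range
makes `L*` injective, so `L x₀ = f`.
-/

open ContinuousLinearMap Filter Topology
open scoped InnerProductSpace

lemma AntitoneOn.tendsto_nhdsGT_atTop_of_not_bddAbove {g : ℝ → ℝ} {a : ℝ}
    (hg : AntitoneOn g (Set.Ioi a)) (hb : ¬BddAbove (g '' Set.Ioi a)) :
    Tendsto g (𝓝[>] a) atTop := by
  refine tendsto_atTop.2 fun b => ?_
  obtain ⟨_, ⟨t, ht, rfl⟩, hbt⟩ := not_bddAbove_iff.1 hb b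
  filter_upwards [Ioo_mem_nhdsGT ht] with s hs
  exact hbt.le.trans (hg hs.1 ht hs.2.le)

lemma cauchySeq_of_norm_sub_sq_le {E : Type*} [SeminormedAddCommGroup E] {u : ℕ → E}
    (hu : ∀ m n, m ≤ n → ‖u n - u m‖ ^ 2 ≤ ‖u n‖ ^ 2 - ‖u m‖ ^ 2)
    (hb : BddAbove (Set.range fun n => ‖u n‖)) : CauchySeq u := by
  set g : ℕ → ℝ := fun n => ‖u n‖ ^ 2
  have hg : Monotone g := monotone_nat_of_le_succ fun n =>
    sub_nonneg.1 ((sq_nonneg _).trans (hu n (n + 1) n.le_succ))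
  obtain ⟨M, hM⟩ := hb
  have hgb : BddAbove (Set.range g) := ⟨M ^ 2, by
    rintro _ ⟨n, rfl⟩
    exact pow_le_pow_left₀ (norm_nonneg _) (hM ⟨n, rfl⟩) 2⟩
  have hdist : ∀ N n, N ≤ n → ‖u n - u N‖ ≤ √((⨆ k, g k) - g N) := fun N n hNn =>
    Real.le_sqrt_of_sq_le ((hu N n hNn).trans (by linarith [le_ciSup hgb n]))
  refine cauchySeq_of_le_tendsto_0 (fun N => 2 * √((⨆ k, g k) - g N)) (fun n m N hn hm => ?_) ?_
  · calc dist (u n) (u m) ≤ ‖u n - u N‖ + ‖u m - u N‖ := by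
          rw [dist_eq_norm, ← sub_sub_sub_cancel_right _ _ (u N)]
          exact norm_sub_le _ _
      _ ≤ _ := by linarith [hdist N n hn, hdist N m hm]
  · have hlim : Tendsto (fun N => (⨆ k, g k) - g N) atTop (𝓝 0) := by
      simpa using (tendsto_atTop_ciSup hg hgb).const_sub (⨆ k, g k)
    simpa using hlim.sqrt.const_mul 2

open RCLike in
lemma ContinuousLinearMap.IsPositive.norm_sub_sq_le_of_smul_add_eq {𝕜 E : Type*} [RCLike 𝕜]
    [NormedAddCommGroup E] [InnerProductSpace 𝕜 E] {T : E →L[𝕜] E}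
    (hT : T.IsPositive) {α β : ℝ} {x y : E} (hβ : 0 < β) (hβα : β ≤ α)
    (h : (α : 𝕜) • x + T x = (β : 𝕜) • y + T y) :
    ‖y - x‖ ^ 2 ≤ ‖y‖ ^ 2 - ‖x‖ ^ 2 := by
  have hTd : T (y - x) = (α : 𝕜) • x - (β : 𝕜) • y := by
    rw [map_sub]; linear_combination (norm := module) -h
  have hpos : α * ‖x‖ ^ 2 + β * ‖y‖ ^ 2 ≤ (α + β) * re ⟪x, y⟫_𝕜 := by
    have := hT.re_inner_nonneg_left (y - x)
    simp only [hTd, inner_sub_left, inner_sub_right, inner_smul_left, map_sub, conj_ofReal,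
      mul_re, ofReal_re, ofReal_im, zero_mul, sub_zero, inner_re_symm y x,
      inner_self_eq_norm_sq] at this
    linarith
  have hxy : ‖x‖ ≤ ‖y‖ := by
    -- `hpos` and Cauchy–Schwarz give `(‖x‖ - ‖y‖) * (α * ‖x‖ - β * ‖y‖) ≤ 0`
    by_contra! hyx
    have hcs := re_inner_le_norm (𝕜 := 𝕜) x y
    have hgap : 0 < α * ‖x‖ - β * ‖y‖ := by nlinarith [norm_nonneg y]
    nlinarith [mul_pos (sub_pos.2 hyx) hgap,
      mul_le_mul_of_nonneg_left hcs (by linarith : 0 ≤ α + β)]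
  have hx_re : ‖x‖ ^ 2 ≤ re ⟪x, y⟫_𝕜 := by
    nlinarith [pow_le_pow_left₀ (norm_nonneg x) hxy 2]
  rw [norm_sub_sq (𝕜 := 𝕜), inner_re_symm (𝕜 := 𝕜)]
  linarith

lemma ContinuousLinearMap.apply_eq_of_tendsto_of_smul_add_apply_eq {𝕜 E : Type*} [RCLike 𝕜]
    [NormedAddCommGroup E] [NormedSpace 𝕜 E] {T : E →L[𝕜] E} {α : ℕ → ℝ} {u : ℕ → E} {x y : E}
    (hα : Tendsto α atTop (𝓝 0)) (hu : Tendsto u atTop (𝓝 x))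
    (h : ∀ n, (α n : 𝕜) • u n + T (u n) = y) : T x = y := by
  have hlim : Tendsto (fun n => (α n : 𝕜) • u n + T (u n)) atTop
      (𝓝 (((0 : ℝ) : 𝕜) • x + T x)) :=
    (((RCLike.continuous_ofReal.tendsto 0).comp hα).smul hu).add ((T.continuous.tendsto x).comp hu)
  exact (by simpa [h] using hlim : y = T x).symm

lemma ContinuousLinearMap.injective_adjoint_of_denseRange {𝕜 E F : Type*} [RCLike 𝕜]
    [NormedAddCommGroup E] [InnerProductSpace 𝕜 E] [CompleteSpace E]
    [NormedAddCommGroup F] [InnerProductSpace 𝕜 F] [CompleteSpace F]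
    {L : E →L[𝕜] F} (hL : DenseRange L) : Function.Injective (adjoint L) := fun y z hyz =>
  hL.eq_of_inner_left 𝕜 fun w => by rw [← adjoint_inner_left, hyz, adjoint_inner_left]

theorem tikhonov_blowup_general
    {H₁ H₂ : Type*} [NormedAddCommGroup H₁] [InnerProductSpace ℂ H₁] [CompleteSpace H₁]
    [NormedAddCommGroup H₂] [InnerProductSpace ℂ H₂] [CompleteSpace H₂]
    (L : H₁ →L[ℂ] H₂)
    (hdense : DenseRange L) (f : H₂) (hf : f ∉ Set.range L)
    (h : ℝ → H₁)
    (hsol : ∀ α : ℝ, 0 < α → (α : ℂ) • (h α) + (adjoint L) (L (h α)) = (adjoint L) f) :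
    Tendsto (fun α => ‖h α‖) (nhdsWithin 0 (Set.Ioi 0)) atTop := by
  have htik : ∀ α : ℝ, 0 < α → (α : ℂ) • h α + (adjoint L ∘L L) (h α) = adjoint L f := hsol
  have hdist : ∀ β α, 0 < β → β ≤ α → ‖h β - h α‖ ^ 2 ≤ ‖h β‖ ^ 2 - ‖h α‖ ^ 2 :=
    fun β α hβ hβα => (isPositive_adjoint_comp_self L).norm_sub_sq_le_of_smul_add_eq hβ hβα
      ((htik α (hβ.trans_le hβα)).trans (htik β hβ).symm)
  have hanti : AntitoneOn (fun α => ‖h α‖) (Set.Ioi 0) := fun β hβ α _ hβα =>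
    (pow_le_pow_iff_left₀ (norm_nonneg _) (norm_nonneg _) two_ne_zero).1
      (by linarith [hdist β α hβ hβα, sq_nonneg ‖h β - h α‖])
  refine hanti.tendsto_nhdsGT_atTop_of_not_bddAbove fun hbdd => hf ?_
  set a : ℕ → ℝ := fun n => 1 / (n + 1)
  have ha : ∀ n, 0 < a n := fun n => Nat.one_div_pos_of_nat
  have hcauchy : CauchySeq (h ∘ a) := by
    refine cauchySeq_of_norm_sub_sq_le (fun m n hmn => hdist _ _ (ha n) ?_) ?_
    · exact one_div_le_one_div_of_le (by positivity) (by norm_cast; omega)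
    · exact hbdd.mono (by rintro _ ⟨n, rfl⟩; exact ⟨a n, ha n, rfl⟩)
  obtain ⟨x₀, hx₀⟩ := cauchySeq_tendsto_of_complete hcauchy
  refine ⟨x₀, injective_adjoint_of_denseRange hdense ?_⟩
  exact apply_eq_of_tendsto_of_smul_add_apply_eq tendsto_one_div_add_atTop_nhds_zero_nat hx₀
    fun n => htik (a n) (ha n)

/-- Let `L : H₁ → H₂` be a compact injective linear operator between Hilbert
spaces with dense range, and let `f ∈ H₂` not lie in the range of `L`. If `h α` denotes the
unique solution of the Tikhonov equation `α h + L*L h = L* f` (`α > 0`), then `‖h α‖ → ∞` as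
`α → 0⁺`. -/
theorem tikhonov_blowup
    {H₁ H₂ : Type*} [NormedAddCommGroup H₁] [InnerProductSpace ℂ H₁] [CompleteSpace H₁]
    [NormedAddCommGroup H₂] [InnerProductSpace ℂ H₂] [CompleteSpace H₂]
    (L : H₁ →L[ℂ] H₂) (hL : IsCompactOperator L) (hinj : Function.Injective L)
    (hdense : DenseRange L) (f : H₂) (hf : f ∉ Set.range L)
    (h : ℝ → H₁)
    (hsol : ∀ α : ℝ, 0 < α → (α : ℂ) • (h α) + (adjoint L) (L (h α)) = (adjoint L) f) :
    Tendsto (fun α => ‖h α‖) (nhdsWithin 0 (Set.Ioi 0)) atTop :=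
  tikhonov_blowup_general L hdense f hf h hsol
end

section
/- Let H₁, H₂ be Hilbert spaces and L : H₁ → H₂ be compact, injective, with dense range, and let f ∈ H₂ with 0 < δ < ‖f‖. For α > 0 let h_α be the unique solution of αh_α + L*Lh_α = L*f. Then the function α ↦ ‖Lh_α − f‖ is continuous and strictly monotonically increasing on (0,∞), with limit 0 as α → 0⁺ and limit ‖f‖ as α → ∞; consequently there exists exactly one α > 0 with ‖Lh_α − f‖ = δ. -/
/-!
Put `A = L L*`, a positive operator which is even positive definite because `L` has dense range.
Applying `L` to the Tikhonov equation shows that the residual `r α = L h_α - f` solves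
`(α + A) r α = -α f`. Everything then follows from the coercivity estimate
`α ‖x‖ ≤ ‖(α + A) x‖`, which is strict for `x ≠ 0`, applied to
* `(α + A) (r α - r β) = (β - α) (r β + f)` (continuity),
* `(α + A) (r α + f) = A f` (the limit `-f` of `r α` at infinity),
* `(α + A) (β r α - α r β) = α (β - α) r β` (strict monotonicity),
* `(α + A) (r α + α g) = α (α g - (f - A g))` with `A g` close to `f`, using that `A` has dense
  range (the limit `0` at `0⁺`).
Existence and uniqueness of the discrepancy parameter is then the intermediate value theorem.
-/

open ContinuousLinearMap Filter Topology Set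

section

variable {𝕜 E : Type*} [RCLike 𝕜] [NormedAddCommGroup E] [InnerProductSpace 𝕜 E]
  {A : E →ₗ[𝕜] E} {f : E}

open RCLike

local notation "⟪" x ", " y "⟫" => inner 𝕜 x y

theorem mul_norm_sq_add_re_inner_le (x y : E) (α : ℝ) :
    α * ‖x‖ ^ 2 + re ⟪y, x⟫ ≤ ‖(α : 𝕜) • x + y‖ * ‖x‖ := by
  have hre : re ⟪(α : 𝕜) • x + y, x⟫ = α * ‖x‖ ^ 2 + re ⟪y, x⟫ := by
    rw [inner_add_left, inner_smul_left, inner_self_eq_norm_sq_to_K, conj_ofReal, map_add,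
      ← ofReal_pow, ← ofReal_mul, ofReal_re]
  exact hre ▸ re_inner_le_norm _ _

theorem mul_norm_le_norm_smul_add_of_re_inner_nonneg {x y : E} (h : 0 ≤ re ⟪y, x⟫) (α : ℝ) :
    α * ‖x‖ ≤ ‖(α : 𝕜) • x + y‖ := by
  rcases eq_or_ne x 0 with rfl | hx
  · simp
  · refine le_of_mul_le_mul_right ?_ (norm_pos_iff.mpr hx)
    nlinarith [mul_norm_sq_add_re_inner_le (𝕜 := 𝕜) x y α]

theorem mul_norm_lt_norm_smul_add_of_re_inner_pos {x y : E} (h : 0 < re ⟪y, x⟫) (α : ℝ) :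
    α * ‖x‖ < ‖(α : 𝕜) • x + y‖ := by
  refine lt_of_mul_lt_mul_right ?_ (norm_nonneg x)
  nlinarith [mul_norm_sq_add_re_inner_le (𝕜 := 𝕜) x y α]

theorem LinearMap.denseRange_of_re_inner_pos [CompleteSpace E] (hA : ∀ x ≠ 0, 0 < re ⟪A x, x⟫) :
    DenseRange A := by
  rw [DenseRange, ← LinearMap.coe_range, Submodule.dense_iff_topologicalClosure_eq_top,
    Submodule.topologicalClosure_eq_top_iff, Submodule.eq_bot_iff]
  intro x hx
  by_contra hx0
  simpa [hx _ (LinearMap.mem_range_self A x)] using hA x hx0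

theorem LinearMap.re_inner_nonneg_of_pos (hA : ∀ x ≠ 0, 0 < re ⟪A x, x⟫) (x : E) :
    0 ≤ re ⟪A x, x⟫ := by
  rcases eq_or_ne x 0 with rfl | hx
  · simp
  · exact (hA x hx).le

namespace Tikhonov

theorem mul_norm_sub_le (hA : ∀ x, 0 ≤ re ⟪A x, x⟫) {u v : E} {α β : ℝ}
    (hu : (α : 𝕜) • u + A u = -((α : 𝕜) • f)) (hv : (β : 𝕜) • v + A v = -((β : 𝕜) • f)) :
    α * ‖u - v‖ ≤ |β - α| * ‖v + f‖ := by
  have hdiff : (α : 𝕜) • (u - v) + A (u - v) = ((β - α : ℝ) : 𝕜) • (v + f) := by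
    rw [map_sub, ofReal_sub]
    linear_combination (norm := module) hu - hv
  calc α * ‖u - v‖ ≤ ‖(α : 𝕜) • (u - v) + A (u - v)‖ :=
        mul_norm_le_norm_smul_add_of_re_inner_nonneg (hA _) α
    _ = |β - α| * ‖v + f‖ := by rw [hdiff, norm_smul, norm_ofReal]

theorem mul_norm_add_le (hA : ∀ x, 0 ≤ re ⟪A x, x⟫) {u : E} {α : ℝ}
    (hu : (α : 𝕜) • u + A u = -((α : 𝕜) • f)) :
    α * ‖u + f‖ ≤ ‖A f‖ := by
  have hsum : (α : 𝕜) • (u + f) + A (u + f) = A f := by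
    rw [map_add]
    linear_combination (norm := module) hu
  exact hsum ▸ mul_norm_le_norm_smul_add_of_re_inner_nonneg (hA _) α

theorem norm_lt_norm_of_lt (hA : ∀ x ≠ 0, 0 < re ⟪A x, x⟫) {u v : E} (hf : f ≠ 0)
    {α β : ℝ} (hα : 0 < α) (hαβ : α < β)
    (hu : (α : 𝕜) • u + A u = -((α : 𝕜) • f)) (hv : (β : 𝕜) • v + A v = -((β : 𝕜) • f)) :
    ‖u‖ < ‖v‖ := by
  have hβ : 0 < β := hα.trans hαβ
  have hv0 : v ≠ 0 := by
    rintro rfl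
    rw [smul_zero, map_zero, add_zero, eq_comm, neg_eq_zero, smul_eq_zero, ofReal_eq_zero] at hv
    exact hv.elim hβ.ne' hf
  set z := (β : 𝕜) • u - (α : 𝕜) • v
  have hz : (α : 𝕜) • z + A z = ((α * (β - α) : ℝ) : 𝕜) • v := by
    rw [map_sub, map_smul, map_smul]
    push_cast
    linear_combination (norm := module) (β : 𝕜) • hu - (α : 𝕜) • hv
  have hz0 : z ≠ 0 := by
    intro h0
    rw [h0, map_zero, smul_zero, add_zero, eq_comm, smul_eq_zero, ofReal_eq_zero] at hz
    exact hz.elim (mul_pos hα (sub_pos.2 hαβ)).ne' hv0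
  have hz_lt : ‖z‖ < (β - α) * ‖v‖ := by
    refine lt_of_mul_lt_mul_left ?_ hα.le
    calc α * ‖z‖ < ‖(α : 𝕜) • z + A z‖ := mul_norm_lt_norm_smul_add_of_re_inner_pos (hA z hz0) α
      _ = α * ((β - α) * ‖v‖) := by
        rw [hz, norm_smul, norm_ofReal, abs_of_pos (mul_pos hα (sub_pos.2 hαβ)), mul_assoc]
  refine lt_of_mul_lt_mul_left ?_ hβ.le
  calc β * ‖u‖ = ‖z + (α : 𝕜) • v‖ := by
        rw [sub_add_cancel, norm_smul, norm_ofReal, abs_of_pos hβ]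
    _ ≤ ‖z‖ + α * ‖v‖ := by
        grw [norm_add_le, norm_smul, norm_ofReal, abs_of_pos hα]
    _ < β * ‖v‖ := by linarith

theorem norm_le_norm_sub_apply_add (hA : ∀ x, 0 ≤ re ⟪A x, x⟫) {u : E}
    {α : ℝ} (hα : 0 < α) (hu : (α : 𝕜) • u + A u = -((α : 𝕜) • f)) (g : E) :
    ‖u‖ ≤ ‖f - A g‖ + 2 * α * ‖g‖ := by
  have hshift : (α : 𝕜) • (u + (α : 𝕜) • g) + A (u + (α : 𝕜) • g)
      = (α : 𝕜) • ((α : 𝕜) • g - (f - A g)) := by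
    rw [map_add, map_smul]
    linear_combination (norm := module) hu
  have hle : ‖u + (α : 𝕜) • g‖ ≤ ‖(α : 𝕜) • g - (f - A g)‖ := by
    refine le_of_mul_le_mul_left ?_ hα
    calc α * ‖u + (α : 𝕜) • g‖ ≤ _ := mul_norm_le_norm_smul_add_of_re_inner_nonneg (hA _) α
      _ = α * ‖(α : 𝕜) • g - (f - A g)‖ := by rw [hshift, norm_smul, norm_ofReal, abs_of_pos hα]
  calc ‖u‖ ≤ ‖u + (α : 𝕜) • g‖ + ‖(α : 𝕜) • g‖ := norm_le_add_norm_add u _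
    _ ≤ ‖f - A g‖ + 2 * α * ‖g‖ := by
      grw [hle, norm_sub_le, norm_smul, norm_ofReal, abs_of_pos hα]
      linarith

theorem continuousOn (hA : ∀ x, 0 ≤ re ⟪A x, x⟫) {r : ℝ → E}
    (hr : ∀ α : ℝ, 0 < α → (α : 𝕜) • r α + A (r α) = -((α : 𝕜) • f)) :
    ContinuousOn r (Ioi 0) := by
  intro β hβ
  rw [ContinuousWithinAt, tendsto_iff_norm_sub_tendsto_zero]
  have hbound : Tendsto (fun α ↦ |β - α| * ‖r β + f‖ / α) (𝓝[Ioi 0] β) (𝓝 0) := by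
    have hcont : ContinuousAt (fun α ↦ |β - α| * ‖r β + f‖ / α) β := by
      fun_prop (disch := exact (ne_of_gt hβ))
    simpa using hcont.tendsto.mono_left nhdsWithin_le_nhds
  refine squeeze_zero' (Eventually.of_forall fun _ ↦ norm_nonneg _) ?_ hbound
  filter_upwards [self_mem_nhdsWithin] with α (hα : 0 < α)
  exact (le_div_iff₀' hα).2 (mul_norm_sub_le hA (hr α hα) (hr β hβ))

theorem tendsto_atTop (hA : ∀ x, 0 ≤ re ⟪A x, x⟫) {r : ℝ → E}
    (hr : ∀ α : ℝ, 0 < α → (α : 𝕜) • r α + A (r α) = -((α : 𝕜) • f)) :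
    Tendsto r atTop (𝓝 (-f)) := by
  rw [tendsto_iff_norm_sub_tendsto_zero]
  refine squeeze_zero' (Eventually.of_forall fun _ ↦ norm_nonneg _) ?_
    ((tendsto_const_nhds (x := ‖A f‖)).div_atTop tendsto_id)
  filter_upwards [eventually_gt_atTop 0] with α hα
  rw [sub_neg_eq_add, id, le_div_iff₀' hα]
  exact mul_norm_add_le hA (hr α hα)

theorem tendsto_norm_nhdsGT_zero [CompleteSpace E] (hA : ∀ x ≠ 0, 0 < re ⟪A x, x⟫) {r : ℝ → E}
    (hr : ∀ α : ℝ, 0 < α → (α : 𝕜) • r α + A (r α) = -((α : 𝕜) • f)) :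
    Tendsto (fun α ↦ ‖r α‖) (𝓝[>] 0) (𝓝 0) := by
  refine tendsto_order.2 ⟨fun a ha ↦ Eventually.of_forall fun α ↦ ha.trans_le (norm_nonneg _),
    fun ε hε ↦ ?_⟩
  obtain ⟨g, hg⟩ := (LinearMap.denseRange_of_re_inner_pos hA).exists_dist_lt f hε
  have hbound : Tendsto (fun α ↦ ‖f - A g‖ + 2 * α * ‖g‖) (𝓝[>] 0) (𝓝 ‖f - A g‖) := by
    have hcont : Continuous (fun α ↦ ‖f - A g‖ + 2 * α * ‖g‖) := by fun_prop
    simpa using hcont.continuousAt.tendsto.mono_left (nhdsWithin_le_nhds (a := (0 : ℝ)))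
  rw [dist_eq_norm] at hg
  filter_upwards [hbound.eventually (gt_mem_nhds hg), self_mem_nhdsWithin] with α hlt (hα : 0 < α)
  have hle := norm_le_norm_sub_apply_add (LinearMap.re_inner_nonneg_of_pos hA) hα (hr α hα) g
  exact hle.trans_lt hlt

end Tikhonov

end

theorem ContinuousLinearMap.re_inner_comp_adjoint_apply_pos {𝕜 E F : Type*} [RCLike 𝕜]
    [NormedAddCommGroup E] [InnerProductSpace 𝕜 E] [CompleteSpace E]
    [NormedAddCommGroup F] [InnerProductSpace 𝕜 F] [CompleteSpace F]
    {L : E →L[𝕜] F} (hL : DenseRange L) {x : F} (hx : x ≠ 0) :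
    0 < RCLike.re (inner 𝕜 ((L ∘L adjoint L) x) x) := by
  have hker : L.rangeᗮ = ⊥ := by
    rw [← Submodule.topologicalClosure_eq_top_iff, ← Submodule.dense_iff_topologicalClosure_eq_top]
    rwa [LinearMap.coe_range, coe_coe]
  have hLx : adjoint L x ≠ 0 := by
    intro h0
    have : x ∈ L.rangeᗮ := by rw [L.orthogonal_range]; exact h0
    exact hx (by simpa [hker] using this)
  have hnorm := (adjoint L).apply_norm_sq_eq_inner_adjoint_left x
  rw [adjoint_adjoint] at hnorm
  rw [← hnorm]
  exact pow_pos (norm_pos_iff.2 hLx) 2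

theorem StrictMonoOn.existsUnique_eq_of_tendsto {g : ℝ → ℝ} {c a b δ : ℝ}
    (hmono : StrictMonoOn g (Ioi c)) (hcont : ContinuousOn g (Ioi c))
    (hc : Tendsto g (𝓝[>] c) (𝓝 a)) (htop : Tendsto g atTop (𝓝 b)) (ha : a < δ) (hb : δ < b) :
    ∃! α, c < α ∧ g α = δ := by
  obtain ⟨α₀, hα₀, hα₀c⟩ := ((hc.eventually (gt_mem_nhds ha)).and self_mem_nhdsWithin).exists
  obtain ⟨α₁, hα₁, hα₁c⟩ := ((htop.eventually (lt_mem_nhds hb)).and (eventually_gt_atTop c)).exists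
  obtain ⟨α, hα, hgα⟩ := hcont.surjOn_Icc hα₀c hα₁c ⟨hα₀.le, hα₁.le⟩
  exact ⟨α, ⟨hα, hgα⟩, fun β hβ ↦ hmono.injOn hβ.1 hα (hβ.2.trans hgα.symm)⟩

theorem morozov_discrepancy_general
    {H₁ H₂ : Type*} [NormedAddCommGroup H₁] [InnerProductSpace ℂ H₁] [CompleteSpace H₁]
    [NormedAddCommGroup H₂] [InnerProductSpace ℂ H₂] [CompleteSpace H₂]
    (L : H₁ →L[ℂ] H₂)
    (hdense : DenseRange L)
    (f : H₂) (δ : ℝ) (hδ : 0 < δ) (hδf : δ < ‖f‖)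
    (h : ℝ → H₁)
    (hsol : ∀ α : ℝ, 0 < α → (α : ℂ) • (h α) + (adjoint L) (L (h α)) = (adjoint L) f) :
    ContinuousOn (fun α : ℝ => ‖L (h α) - f‖) (Ioi 0) ∧
    StrictMonoOn (fun α : ℝ => ‖L (h α) - f‖) (Ioi 0) ∧
    Tendsto (fun α : ℝ => ‖L (h α) - f‖) (nhdsWithin 0 (Ioi 0)) (𝓝 0) ∧
    Tendsto (fun α : ℝ => ‖L (h α) - f‖) atTop (𝓝 ‖f‖) ∧
    (∃! α : ℝ, 0 < α ∧ ‖L (h α) - f‖ = δ) := by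
  set A : H₂ →ₗ[ℂ] H₂ := (L ∘L adjoint L).toLinearMap
  have hA : ∀ x ≠ 0, 0 < RCLike.re (inner ℂ (A x) x) := fun x hx ↦
    re_inner_comp_adjoint_apply_pos hdense hx
  have hr : ∀ α : ℝ, 0 < α → (α : ℂ) • (L (h α) - f) + A (L (h α) - f) = -((α : ℂ) • f) := by
    intro α hα
    have := congrArg L (hsol α hα)
    simp only [map_add, map_smul] at this
    simp only [A, coe_coe, comp_apply, map_sub]
    linear_combination (norm := module) this
  have hf : f ≠ 0 := by rintro rfl; simp at hδf; linarith
  have hmono : StrictMonoOn (fun α : ℝ => ‖L (h α) - f‖) (Ioi 0) := fun α hα β hβ hαβ ↦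
    Tikhonov.norm_lt_norm_of_lt hA hf hα hαβ (hr α hα) (hr β hβ)
  have hcont := (Tikhonov.continuousOn (LinearMap.re_inner_nonneg_of_pos hA) hr).norm
  have h0 := Tikhonov.tendsto_norm_nhdsGT_zero hA hr
  have htop := (Tikhonov.tendsto_atTop (LinearMap.re_inner_nonneg_of_pos hA) hr).norm
  rw [norm_neg] at htop
  exact ⟨hcont, hmono, h0, htop, hmono.existsUnique_eq_of_tendsto hcont h0 htop hδ hδf⟩

/-- **Morozov discrepancy principle.** Let `L : H₁ → H₂` be compact, injective,
with dense range between Hilbert spaces, `f ∈ H₂` and `0 < δ < ‖f‖`. If `h α` solves the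
Tikhonov equation `α h + L*L h = L* f` for every `α > 0`, then `α ↦ ‖L (h α) − f‖` is
continuous and strictly increasing on `(0,∞)`, tends to `0` as `α → 0⁺` and to `‖f‖` as
`α → ∞`; consequently there is exactly one `α > 0` with `‖L (h α) − f‖ = δ`. -/
theorem morozov_discrepancy
    {H₁ H₂ : Type*} [NormedAddCommGroup H₁] [InnerProductSpace ℂ H₁] [CompleteSpace H₁]
    [NormedAddCommGroup H₂] [InnerProductSpace ℂ H₂] [CompleteSpace H₂]
    (L : H₁ →L[ℂ] H₂) (hL : IsCompactOperator L) (hinj : Function.Injective L)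
    (hdense : DenseRange L)
    (f : H₂) (δ : ℝ) (hδ : 0 < δ) (hδf : δ < ‖f‖)
    (h : ℝ → H₁)
    (hsol : ∀ α : ℝ, 0 < α → (α : ℂ) • (h α) + (adjoint L) (L (h α)) = (adjoint L) f) :
    ContinuousOn (fun α : ℝ => ‖L (h α) - f‖) (Ioi 0) ∧
    StrictMonoOn (fun α : ℝ => ‖L (h α) - f‖) (Ioi 0) ∧
    Tendsto (fun α : ℝ => ‖L (h α) - f‖) (nhdsWithin 0 (Ioi 0)) (𝓝 0) ∧
    Tendsto (fun α : ℝ => ‖L (h α) - f‖) atTop (𝓝 ‖f‖) ∧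
    (∃! α : ℝ, 0 < α ∧ ‖L (h α) - f‖ = δ) :=
  morozov_discrepancy_general L hdense f δ hδ hδf h hsol
end
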